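/- arXiv:quant-ph/0306179 — 5 statements merged into one kernel-verified Lean document; each statement's English description precedes it below -/
import Mathlib

section
/- Every frame function f on the effects is continuous at the zero operator: for every ε > 0 there is δ > 0 such that any effect E with Hilbert–Schmidt norm |E| < δ has f(E) < ε. -/
open Matrix Finset ComplexOrder

def IsEffect {d : ℕ} (E : Matrix (Fin d) (Fin d) ℂ) : Prop :=
  E.PosSemidef ∧ (1 - E).PosSemidef

def IsFrameFunction {d : ℕ} (f : Matrix (Fin d) (Fin d) ℂ → ℝ) : Prop :=
  (∀ E, IsEffect E → f E ∈ Set.Icc (0 : ℝ) 1) ∧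
  ∀ (n : ℕ) (E : Fin n → Matrix (Fin d) (Fin d) ℂ),
    (∀ j, IsEffect (E j)) → (∑ j, E j = 1) → ∑ j, f (E j) = 1

noncomputable def hsNorm {d : ℕ} (A : Matrix (Fin d) (Fin d) ℂ) : ℝ :=
  Real.sqrt ((Aᴴ * A).trace.re)

def IsProjection {d : ℕ} (P : Matrix (Fin d) (Fin d) ℂ) : Prop :=
  P.IsHermitian ∧ P * P = P

/-!
If `N * |E| ≤ 1`, the positive matrix `N • E` has all eigenvalues at most `|N • E| ≤ 1`, so it is
an effect. Comparing the POVMs `{E, …, E, 1 - N • E}` (with `N` copies of `E`) and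
`{N • E, 1 - N • E}` gives `N * f E = f (N • E) ≤ 1`. Hence `δ = 1 / N` works once `N > 1 / ε`.
-/

namespace Matrix.IsHermitian
variable {n 𝕜 : Type*} [Fintype n] [DecidableEq n] [RCLike 𝕜] {A : Matrix n n 𝕜}

lemma re_trace_conjTranspose_mul_self (hA : A.IsHermitian) :
    RCLike.re (Aᴴ * A).trace = ∑ i, hA.eigenvalues i ^ 2 := by
  rw [hA.eq]
  conv_lhs => rw [hA.spectral_theorem, ← map_mul, Unitary.conjStarAlgAut_apply, trace_mul_cycle,
    Unitary.coe_star_mul_self, one_mul, diagonal_mul_diagonal, trace_diagonal]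
  simp [sq]

open scoped MatrixOrder in
lemma posSemidef_one_sub_of_eigenvalues_le_one (hA : A.IsHermitian)
    (h : ∀ i, hA.eigenvalues i ≤ 1) : (1 - A).PosSemidef := by
  rw [← Matrix.le_iff, CFC.le_one_iff (R := ℝ) A hA.isSelfAdjoint,
    hA.spectrum_real_eq_range_eigenvalues]
  rintro _ ⟨i, rfl⟩
  exact h i

end Matrix.IsHermitian

lemma Matrix.IsHermitian.eigenvalues_le_hsNorm {d : ℕ} {A : Matrix (Fin d) (Fin d) ℂ}
    (hA : A.IsHermitian) (i : Fin d) : hA.eigenvalues i ≤ hsNorm A := by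
  refine (le_abs_self _).trans (Real.abs_le_sqrt ?_)
  rw [← RCLike.re_to_complex, hA.re_trace_conjTranspose_mul_self]
  exact single_le_sum (fun j _ ↦ sq_nonneg (hA.eigenvalues j)) (mem_univ i)

lemma hsNorm_smul {d : ℕ} (c : ℂ) (A : Matrix (Fin d) (Fin d) ℂ) :
    hsNorm (c • A) = ‖c‖ * hsNorm A := by
  have hc : star c * c = ((‖c‖ ^ 2 : ℝ) : ℂ) := by
    rw [Complex.star_def, ← Complex.normSq_eq_conj_mul_self, Complex.normSq_eq_norm_sq]
  rw [hsNorm, hsNorm, conjTranspose_smul, smul_mul_smul_comm, hc, trace_smul,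
    smul_eq_mul, Complex.re_ofReal_mul, Real.sqrt_mul (sq_nonneg _),
    Real.sqrt_sq (norm_nonneg c)]

section Effect
variable {d : ℕ} {E : Matrix (Fin d) (Fin d) ℂ}

lemma IsEffect.one_sub (hE : IsEffect E) : IsEffect (1 - E) :=
  ⟨hE.2, by simpa using hE.1⟩

lemma isEffect_of_posSemidef_of_hsNorm_le_one (hE : E.PosSemidef) (h : hsNorm E ≤ 1) :
    IsEffect E :=
  ⟨hE, hE.1.posSemidef_one_sub_of_eigenvalues_le_one fun i ↦
    (hE.1.eigenvalues_le_hsNorm i).trans h⟩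

end Effect

namespace IsFrameFunction
variable {d : ℕ} {f : Matrix (Fin d) (Fin d) ℂ → ℝ}

lemma sum_add_eq_one (hf : IsFrameFunction f) {n : ℕ} {E : Fin n → Matrix (Fin d) (Fin d) ℂ}
    {G : Matrix (Fin d) (Fin d) ℂ} (hE : ∀ j, IsEffect (E j)) (hG : IsEffect G)
    (hsum : ∑ j, E j + G = 1) : ∑ j, f (E j) + f G = 1 := by
  have hsnoc : ∀ j, IsEffect (Fin.snoc (α := fun _ ↦ Matrix (Fin d) (Fin d) ℂ) E G j) :=
    Fin.lastCases (by simpa using hG) (by simpa using hE)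
  simpa [Fin.sum_univ_castSucc] using hf.2 (n + 1) _ hsnoc (by simpa [Fin.sum_univ_castSucc])

lemma map_nsmul (hf : IsFrameFunction f) {E : Matrix (Fin d) (Fin d) ℂ} (N : ℕ)
    (hE : IsEffect E) (hNE : IsEffect (N • E)) : f (N • E) = N * f E := by
  have h₁ := hf.sum_add_eq_one (fun _ : Fin 1 ↦ hNE) hNE.one_sub (by simp)
  have h₂ := hf.sum_add_eq_one (fun _ : Fin N ↦ hE) hNE.one_sub (by simp)
  rw [Fin.sum_univ_one] at h₁
  rw [Fin.sum_const, nsmul_eq_mul (α := ℝ)] at h₂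
  linarith

lemma natCast_mul_apply_le_one (hf : IsFrameFunction f) {E : Matrix (Fin d) (Fin d) ℂ}
    (hE : IsEffect E) {N : ℕ} (hN : N * hsNorm E ≤ 1) : N * f E ≤ 1 := by
  have hNE : IsEffect (N • E) := by
    rw [← Nat.cast_smul_eq_nsmul ℂ]
    refine isEffect_of_posSemidef_of_hsNorm_le_one (hE.1.smul (Nat.cast_nonneg N)) ?_
    rwa [hsNorm_smul, Complex.norm_natCast]
  rw [← hf.map_nsmul N hE hNE]
  exact (hf.1 _ hNE).2

end IsFrameFunction

theorem frame_function_continuous_at_zero {d : ℕ}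
    (f : Matrix (Fin d) (Fin d) ℂ → ℝ) (hf : IsFrameFunction f) :
    ∀ ε > (0 : ℝ), ∃ δ > (0 : ℝ),
      ∀ E : Matrix (Fin d) (Fin d) ℂ, IsEffect E → hsNorm E < δ → f E < ε := by
  intro ε hε
  obtain ⟨N, hN⟩ := exists_nat_gt (1 / ε)
  have hN₀ : (0 : ℝ) < N := (one_div_pos.2 hε).trans hN
  refine ⟨1 / N, one_div_pos.2 hN₀, fun E hE hEδ ↦ ?_⟩
  have hfE := hf.natCast_mul_apply_le_one hE ((lt_div_iff₀' hN₀).1 hEδ).le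
  calc f E ≤ 1 / N := (le_div_iff₀' hN₀).2 hfE
    _ < ε := (div_lt_iff₀' hN₀).2 ((div_lt_iff₀ hε).1 hN)
end

section
/- A real-valued function f on the effects that is additive and homogeneous over nonnegative reals extends uniquely to a real-linear functional on the real vector space of Hermitian operators. -/
open Matrix Finset ComplexOrder

/-!
Positive homogeneity transports `f` from the effects `[0, 1]` to the whole positive cone by
`A ↦ t⁻¹ f (t A)` for any `t > 0` with `t A ≤ 1`, and there it stays additive and positively
homogeneous. Every self-adjoint `A` is a difference `P - N` of positive matrices (`A + c • 1` and
`c • 1` for large `c`), and since `P - N = P' - N'` means `P + N' = P' + N`, additivity makes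
`A ↦ f P - f N` well defined; it is then linear. It is unique because the effects span the
self-adjoint matrices. All of this only needs `1` to be an order unit of the ordered real vector
space of self-adjoint matrices.
-/

open Set

section OrderUnit

variable {V : Type*} [AddCommGroup V] [PartialOrder V]

theorem sub_eq_sub_of_additiveOn_Ici {g : V → ℝ}
    (hg_add : ∀ a b : V, 0 ≤ a → 0 ≤ b → g (a + b) = g a + g b) {p n p' n' : V} (hp : 0 ≤ p)
    (hn : 0 ≤ n) (hp' : 0 ≤ p') (hn' : 0 ≤ n') (h : p - n = p' - n') :
    g p - g n = g p' - g n' := by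
  have hsum : g (p + n') = g (p' + n) := by rw [sub_eq_sub_iff_add_eq_add.1 h]
  rw [hg_add p n' hp hn', hg_add p' n hp' hn] at hsum
  linarith

variable [Module ℝ V]

def IsOrderUnit (u : V) : Prop :=
  0 ≤ u ∧ ∀ v : V, ∃ c : ℝ, v ≤ c • u

theorem LinearMap.eq_of_eqOn_Ici (hgen : ∀ v : V, ∃ p n : V, 0 ≤ p ∧ 0 ≤ n ∧ p - n = v)
    {L L' : V →ₗ[ℝ] ℝ} (h : EqOn L L' (Ici 0)) : L = L' := by
  ext v
  obtain ⟨p, n, hp, hn, rfl⟩ := hgen v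
  rw [map_sub, map_sub, h hp, h hn]

open Classical in
/-- `t⁻¹ f (t v)` for any `t > 0` with `t v ∈ [0, u]`, which does not depend on `t` when `f` is
homogeneous on `[0, u]` (see `coneExtension_eq`); junk value `0` if there is no such `t`. -/
noncomputable def coneExtension (u : V) (f : V → ℝ) (v : V) : ℝ :=
  if h : ∃ t : ℝ, 0 < t ∧ t • v ∈ Icc 0 u then h.choose⁻¹ * f (h.choose • v) else 0

section ConeExtension

variable {u : V} {f : V → ℝ}
  (hf_smul : ∀ (a : V) (t : ℝ), 0 ≤ t → a ∈ Icc 0 u → t • a ∈ Icc 0 u → f (t • a) = t * f a)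
include hf_smul

theorem coneExtension_eq {v : V} {t : ℝ} (ht : 0 < t) (htv : t • v ∈ Icc 0 u) :
    coneExtension u f v = t⁻¹ * f (t • v) := by
  have h : ∃ s : ℝ, 0 < s ∧ s • v ∈ Icc 0 u := ⟨t, ht, htv⟩
  obtain ⟨hs, hsv⟩ := h.choose_spec
  have hst : (h.choose / t) • t • v = h.choose • v := by rw [smul_smul, div_mul_cancel₀ _ ht.ne']
  have := hf_smul (t • v) (h.choose / t) (div_nonneg hs.le ht.le) htv (hst ▸ hsv)
  rw [coneExtension, dif_pos h, ← hst, this]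
  field_simp

theorem coneExtension_of_mem_Icc {v : V} (hv : v ∈ Icc 0 u) : coneExtension u f v = f v := by
  rw [coneExtension_eq hf_smul one_pos (by rwa [one_smul]), one_smul, inv_one, one_mul]

end ConeExtension

variable [IsOrderedAddMonoid V] [PosSMulMono ℝ V] {u : V}

theorem exists_pos_smul_mem_Icc (hu : IsOrderUnit u) {v : V}
    (hv : 0 ≤ v) : ∃ t : ℝ, 0 < t ∧ t • v ∈ Icc 0 u := by
  obtain ⟨c, hc⟩ := hu.2 v
  set s := max c 1
  have hs : 0 < s := lt_max_of_lt_right one_pos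
  refine ⟨s⁻¹, inv_pos.2 hs, smul_nonneg (inv_nonneg.2 hs.le) hv, ?_⟩
  calc s⁻¹ • v ≤ s⁻¹ • s • u :=
        smul_le_smul_of_nonneg_left (hc.trans (smul_le_smul_of_nonneg_right (le_max_left _ _) hu.1))
          (inv_nonneg.2 hs.le)
    _ = u := inv_smul_smul₀ hs.ne' u

theorem exists_nonneg_sub_eq (hu : IsOrderUnit u) (v : V) :
    ∃ p n : V, 0 ≤ p ∧ 0 ≤ n ∧ p - n = v := by
  obtain ⟨c, hc⟩ := hu.2 (-v)
  have hcu : 0 ≤ max c 0 • u := smul_nonneg (le_max_right _ _) hu.1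
  refine ⟨v + max c 0 • u, max c 0 • u, ?_, hcu, add_sub_cancel_right v _⟩
  exact neg_le_iff_add_nonneg'.1 <| hc.trans (smul_le_smul_of_nonneg_right (le_max_left _ _) hu.1)

theorem LinearMap.eqOn_Ici_of_eqOn_Icc (hu : IsOrderUnit u)
    {L L' : V →ₗ[ℝ] ℝ} (h : EqOn L L' (Icc 0 u)) : EqOn L L' (Ici 0) := by
  intro v hv
  obtain ⟨t, ht, htv⟩ := exists_pos_smul_mem_Icc hu hv
  simpa [ht.ne'] using h htv

theorem exists_linearMap_eqOn_Ici (hgen : ∀ v : V, ∃ p n : V, 0 ≤ p ∧ 0 ≤ n ∧ p - n = v)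
    {g : V → ℝ} (hg_add : ∀ a b : V, 0 ≤ a → 0 ≤ b → g (a + b) = g a + g b)
    (hg_smul : ∀ (a : V) (t : ℝ), 0 ≤ t → 0 ≤ a → g (t • a) = t * g a) :
    ∃ L : V →ₗ[ℝ] ℝ, EqOn L g (Ici 0) := by
  choose p n hp hn hpn using hgen
  have hL : ∀ v p' n', 0 ≤ p' → 0 ≤ n' → p' - n' = v → g (p v) - g (n v) = g p' - g n' :=
    fun v p' n' hp' hn' h =>
      sub_eq_sub_of_additiveOn_Ici hg_add (hp v) (hn v) hp' hn' ((hpn v).trans h.symm)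
  have hg_zero : g 0 = 0 := by simpa using hg_smul 0 0 le_rfl le_rfl
  refine ⟨{ toFun := fun v => g (p v) - g (n v)
            map_add' := fun a b => ?_
            map_smul' := fun t a => ?_ }, fun v hv => ?_⟩
  · rw [hL (a + b) (p a + p b) (n a + n b) (add_nonneg (hp a) (hp b)) (add_nonneg (hn a) (hn b))
      (by rw [add_sub_add_comm, hpn, hpn]), hg_add _ _ (hp a) (hp b), hg_add _ _ (hn a) (hn b)]
    ring
  · rcases le_total 0 t with ht | ht
    · rw [hL (t • a) (t • p a) (t • n a) (smul_nonneg ht (hp a)) (smul_nonneg ht (hn a))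
        (by rw [← smul_sub, hpn]), hg_smul _ _ ht (hp a), hg_smul _ _ ht (hn a)]
      simp only [RingHom.id_apply, smul_eq_mul]
      ring
    · have ht' : 0 ≤ -t := neg_nonneg.2 ht
      rw [hL (t • a) ((-t) • n a) ((-t) • p a) (smul_nonneg ht' (hn a)) (smul_nonneg ht' (hp a))
        (by rw [← smul_sub, neg_smul, ← smul_neg, neg_sub, hpn]), hg_smul _ _ ht' (hp a),
        hg_smul _ _ ht' (hn a)]
      simp only [RingHom.id_apply, smul_eq_mul]
      ring
  · simpa [hg_zero] using hL v v 0 hv le_rfl (sub_zero v)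

section ConeExtensionOfOrderUnit

variable {f : V → ℝ}
  (hf_smul : ∀ (a : V) (t : ℝ), 0 ≤ t → a ∈ Icc 0 u → t • a ∈ Icc 0 u → f (t • a) = t * f a)
  (hu : IsOrderUnit u)
include hf_smul hu

theorem coneExtension_smul {a : V} {t : ℝ} (ht : 0 ≤ t) (ha : 0 ≤ a) :
    coneExtension u f (t • a) = t * coneExtension u f a := by
  rcases ht.eq_or_lt with rfl | ht
  · have hf_zero : f 0 = 0 := by
      simpa using hf_smul 0 0 le_rfl ⟨le_rfl, hu.1⟩ (by simpa using hu.1)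
    rw [zero_smul, zero_mul, coneExtension_of_mem_Icc hf_smul ⟨le_rfl, hu.1⟩, hf_zero]
  · obtain ⟨s, hs, hsa⟩ := exists_pos_smul_mem_Icc hu (smul_nonneg ht.le ha)
    rw [coneExtension_eq hf_smul hs hsa]
    rw [smul_smul] at hsa ⊢
    rw [coneExtension_eq hf_smul (mul_pos hs ht) hsa]
    field_simp

theorem coneExtension_add
    (hf_add : ∀ a b : V, a ∈ Icc 0 u → b ∈ Icc 0 u → a + b ∈ Icc 0 u → f (a + b) = f a + f b)
    {a b : V} (ha : 0 ≤ a) (hb : 0 ≤ b) :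
    coneExtension u f (a + b) = coneExtension u f a + coneExtension u f b := by
  obtain ⟨t, ht, hab⟩ := exists_pos_smul_mem_Icc hu (add_nonneg ha hb)
  rw [smul_add] at hab
  have hta : 0 ≤ t • a := smul_nonneg ht.le ha
  have htb : 0 ≤ t • b := smul_nonneg ht.le hb
  have ha' : t • a ∈ Icc 0 u := ⟨hta, (le_add_of_nonneg_right htb).trans hab.2⟩
  have hb' : t • b ∈ Icc 0 u := ⟨htb, (le_add_of_nonneg_left hta).trans hab.2⟩
  rw [coneExtension_eq hf_smul ht (by rwa [smul_add]), coneExtension_eq hf_smul ht ha',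
    coneExtension_eq hf_smul ht hb', smul_add, hf_add _ _ ha' hb' hab, mul_add]

end ConeExtensionOfOrderUnit

theorem exists_unique_linearMap_eqOn_Icc (hu : IsOrderUnit u)
    {f : V → ℝ}
    (hf_add : ∀ a b : V, a ∈ Icc 0 u → b ∈ Icc 0 u → a + b ∈ Icc 0 u → f (a + b) = f a + f b)
    (hf_smul : ∀ (a : V) (t : ℝ), 0 ≤ t → a ∈ Icc 0 u → t • a ∈ Icc 0 u → f (t • a) = t * f a) :
    ∃! L : V →ₗ[ℝ] ℝ, EqOn L f (Icc 0 u) := by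
  have hgen := exists_nonneg_sub_eq hu
  obtain ⟨L, hL⟩ := exists_linearMap_eqOn_Ici hgen
    (fun a b ha hb => coneExtension_add hf_smul hu hf_add ha hb)
    (fun a t ht ha => coneExtension_smul hf_smul hu ht ha)
  have hLf : EqOn L f (Icc 0 u) := fun v hv =>
    (hL hv.1).trans (coneExtension_of_mem_Icc hf_smul hv)
  exact ⟨L, hLf, fun L' hL' =>
    LinearMap.eq_of_eqOn_Ici hgen (LinearMap.eqOn_Ici_of_eqOn_Icc hu (hL'.trans hLf.symm))⟩

end OrderUnit

open scoped MatrixOrder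

instance selfAdjoint.instPosSMulMono {R A : Type*} [Semiring R] [PartialOrder R] [StarMul R]
    [TrivialStar R] [AddCommGroup A] [PartialOrder A] [StarAddMonoid A] [Module R A]
    [StarModule R A] [PosSMulMono R A] : PosSMulMono R (selfAdjoint A) :=
  ⟨fun _ hc _ _ hab => smul_le_smul_of_nonneg_left (β := A) hab hc⟩

theorem Matrix.IsHermitian.exists_le_smul_one {n : Type*} [Fintype n] [DecidableEq n]
    {A : Matrix n n ℂ} (hA : A.IsHermitian) : ∃ c : ℝ, A ≤ c • 1 := by
  obtain ⟨c, hc⟩ := (hA.spectrum_real_eq_range_eigenvalues ▸ finite_range _).bddAbove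
  exact ⟨c, by
    simpa [Algebra.algebraMap_eq_smul_one] using le_algebraMap_of_spectrum_le hc hA.isSelfAdjoint⟩

theorem Matrix.isOrderUnit_one {n : Type*} [Fintype n] [DecidableEq n] :
    IsOrderUnit (1 : selfAdjoint (Matrix n n ℂ)) :=
  ⟨Matrix.nonneg_iff_posSemidef.2 Matrix.PosSemidef.one,
    fun A => Matrix.IsHermitian.exists_le_smul_one A.2⟩

theorem isEffect_iff_mem_Icc {d : ℕ} (A : selfAdjoint (Matrix (Fin d) (Fin d) ℂ)) :
    IsEffect (A : Matrix (Fin d) (Fin d) ℂ) ↔ A ∈ Set.Icc 0 1 := by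
  rw [IsEffect, ← Matrix.nonneg_iff_posSemidef, ← Matrix.le_iff]
  rfl

theorem additive_homogeneous_extends_to_linear {d : ℕ}
    (f : Matrix (Fin d) (Fin d) ℂ → ℝ)
    (hadd : ∀ E₁ E₂ : Matrix (Fin d) (Fin d) ℂ,
      IsEffect E₁ → IsEffect E₂ → IsEffect (E₁ + E₂) →
      f (E₁ + E₂) = f E₁ + f E₂)
    (hhom : ∀ (E : Matrix (Fin d) (Fin d) ℂ) (α : ℝ), 0 ≤ α →
      IsEffect E → IsEffect (α • E) → f (α • E) = α * f E) :
    ∃! L : selfAdjoint (Matrix (Fin d) (Fin d) ℂ) →ₗ[ℝ] ℝ,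
      ∀ (E : Matrix (Fin d) (Fin d) ℂ) (hE : IsEffect E),
        L ⟨E, hE.1.1⟩ = f E := by
  have h_ext := exists_unique_linearMap_eqOn_Icc (Matrix.isOrderUnit_one (n := Fin d))
    (f := fun A => f A)
    (fun a b ha hb hab => hadd a b ((isEffect_iff_mem_Icc a).2 ha) ((isEffect_iff_mem_Icc b).2 hb)
      ((isEffect_iff_mem_Icc (a + b)).2 hab))
    (fun a t ht ha hta => hhom a t ht ((isEffect_iff_mem_Icc a).2 ha)
      ((isEffect_iff_mem_Icc (t • a)).2 hta))
  refine (existsUnique_congr fun L => ⟨fun hL E hE => ?_, fun hL A hA => ?_⟩).1 h_ext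
  · exact hL ((isEffect_iff_mem_Icc ⟨E, hE.1.1⟩).1 hE)
  · exact hL A ((isEffect_iff_mem_Icc A).2 hA)
end

section
/- (Busch's Gleason-type theorem) For every frame function f on the set of effects in C^d, there exists a unique positive semidefinite Hermitian operator W with tr W = 1 (a density operator) such that f(E) = tr(WE) for every effect E. -/
open Matrix Finset ComplexOrder

namespace BG
variable {d : ℕ}

noncomputable def qf (A : Matrix (Fin d) (Fin d) ℂ) (x : Fin d → ℂ) : ℂ :=
  dotProduct (star x) (A *ᵥ x)

noncomputable def Sn (x : Fin d → ℂ) : ℝ := ∑ i, Complex.normSq (x i)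

noncomputable def Nn (A : Matrix (Fin d) (Fin d) ℂ) : ℝ := ∑ i, ∑ j, ‖A i j‖

lemma Sn_nonneg (x : Fin d → ℂ) : 0 ≤ Sn x :=
  Finset.sum_nonneg fun i _ => Complex.normSq_nonneg _

lemma Nn_nonneg (A : Matrix (Fin d) (Fin d) ℂ) : 0 ≤ Nn A :=
  Finset.sum_nonneg fun i _ => Finset.sum_nonneg fun j _ => norm_nonneg _

lemma qf_one (x : Fin d → ℂ) : qf 1 x = (Sn x : ℂ) := by
  simp [qf, Sn, dotProduct, ← Complex.normSq_eq_conj_mul_self]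

lemma qf_add (A B : Matrix (Fin d) (Fin d) ℂ) (x : Fin d → ℂ) :
    qf (A + B) x = qf A x + qf B x := by
  simp [qf, add_mulVec, dotProduct_add]

lemma qf_sub (A B : Matrix (Fin d) (Fin d) ℂ) (x : Fin d → ℂ) :
    qf (A - B) x = qf A x - qf B x := by
  simp [qf, sub_mulVec, dotProduct_sub]

lemma qf_smul (c : ℂ) (A : Matrix (Fin d) (Fin d) ℂ) (x : Fin d → ℂ) :
    qf (c • A) x = c * qf A x := by
  simp [qf, smul_mulVec, dotProduct_smul]

lemma qf_expand (A : Matrix (Fin d) (Fin d) ℂ) (x : Fin d → ℂ) :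
    qf A x = ∑ i, ∑ j, (starRingEnd ℂ) (x i) * (A i j * x j) := by
  simp [qf, dotProduct, mulVec, Finset.mul_sum]

lemma abs_qf_le (A : Matrix (Fin d) (Fin d) ℂ) (x : Fin d → ℂ) :
    ‖qf A x‖ ≤ Nn A * Sn x := by
  rw [qf_expand, Nn, Finset.sum_mul]
  refine (norm_sum_le _ _).trans (Finset.sum_le_sum fun i _ => ?_)
  rw [Finset.sum_mul]
  refine (norm_sum_le _ _).trans (Finset.sum_le_sum fun j _ => ?_)
  have hxi : ‖x i‖ ^ 2 ≤ Sn x := by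
    have := Finset.single_le_sum (f := fun k => Complex.normSq (x k))
      (fun k _ => Complex.normSq_nonneg _) (Finset.mem_univ i)
    rwa [Complex.sq_norm]
  have hxj : ‖x j‖ ^ 2 ≤ Sn x := by
    have := Finset.single_le_sum (f := fun k => Complex.normSq (x k))
      (fun k _ => Complex.normSq_nonneg _) (Finset.mem_univ j)
    rwa [Complex.sq_norm]
  have h1 : ‖(starRingEnd ℂ) (x i) * (A i j * x j)‖
      = ‖A i j‖ * (‖x i‖ * ‖x j‖) := by
    simp [_root_.map_mul]; ring
  rw [h1]
  have h2 : ‖x i‖ * ‖x j‖ ≤ Sn x := by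
    nlinarith [norm_nonneg (x i), norm_nonneg (x j), sq_nonneg (‖x i‖ - ‖x j‖)]
  exact mul_le_mul_of_nonneg_left h2 (norm_nonneg _)

lemma qf_im_eq_zero {A : Matrix (Fin d) (Fin d) ℂ} (hA : A.IsHermitian) (x : Fin d → ℂ) :
    (qf A x).im = 0 := by
  have h : (starRingEnd ℂ) (qf A x) = qf A x := by
    conv_lhs => rw [qf_expand]
    conv_rhs => rw [qf_expand, Finset.sum_comm]
    rw [map_sum]
    refine Finset.sum_congr rfl fun i _ => ?_
    rw [map_sum]
    refine Finset.sum_congr rfl fun j _ => ?_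
    have key : (starRingEnd ℂ) (A i j) = A j i := by
      conv_rhs => rw [← hA]
      simp [conjTranspose_apply]
    rw [_root_.map_mul, _root_.map_mul, key]
    simp
    ring
  exact Complex.conj_eq_iff_im.mp h

lemma psd_of_re_nonneg {A : Matrix (Fin d) (Fin d) ℂ} (hA : A.IsHermitian)
    (h : ∀ x, 0 ≤ (qf A x).re) : A.PosSemidef := by
  refine .of_dotProduct_mulVec_nonneg hA fun x => ?_
  rw [Complex.le_def]
  exact ⟨by simpa [qf] using h x, by simpa [qf] using (qf_im_eq_zero hA x).symm⟩

lemma psd_qf_re_nonneg {A : Matrix (Fin d) (Fin d) ℂ} (hA : A.PosSemidef) (x : Fin d → ℂ) :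
    0 ≤ (qf A x).re := by
  have := hA.dotProduct_mulVec_nonneg x
  rw [Complex.le_def] at this
  simpa [qf] using this.1


lemma smul_psd {c : ℝ} (hc : 0 ≤ c) {A : Matrix (Fin d) (Fin d) ℂ} (hA : A.PosSemidef) :
    ((c : ℂ) • A).PosSemidef := by
  refine psd_of_re_nonneg ?_ fun x => ?_
  · show _ = _
    rw [conjTranspose_smul, hA.1.eq]
    simp [Complex.star_def, Complex.conj_ofReal]
  · rw [qf_smul, Complex.re_ofReal_mul]
    exact mul_nonneg hc (psd_qf_re_nonneg hA x)

lemma herm_smul_real {c : ℝ} {A : Matrix (Fin d) (Fin d) ℂ} (hA : A.IsHermitian) :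
    ((c : ℂ) • A).IsHermitian := by
  show _ = _
  rw [conjTranspose_smul, hA.eq]
  simp [Complex.star_def, Complex.conj_ofReal]

lemma herm_add_smul_psd {A : Matrix (Fin d) (Fin d) ℂ} (hA : A.IsHermitian) {c : ℝ}
    (hc : Nn A ≤ c) : (A + (c : ℂ) • 1).PosSemidef := by
  refine psd_of_re_nonneg (hA.add (herm_smul_real isHermitian_one)) fun x => ?_
  rw [qf_add, qf_smul, qf_one]
  have h1 : -(Nn A * Sn x) ≤ (qf A x).re := by
    have h2 := abs_le.mp (Complex.abs_re_le_norm (qf A x))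
    have h3 := abs_qf_le A x
    linarith [h2.1]
  simp only [Complex.add_re, Complex.re_ofReal_mul, Complex.ofReal_re]
  nlinarith [Sn_nonneg x]

lemma smul_one_sub_psd {A : Matrix (Fin d) (Fin d) ℂ} (hA : A.IsHermitian) {t : ℝ}
    (h : ∀ x, (qf A x).re ≤ t * Sn x) : ((t : ℂ) • 1 - A).PosSemidef := by
  refine psd_of_re_nonneg ((herm_smul_real isHermitian_one).sub hA) fun x => ?_
  rw [qf_sub, qf_smul, qf_one]
  have := h x
  simp only [Complex.sub_re, Complex.re_ofReal_mul, Complex.ofReal_re]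
  linarith

lemma psd_qf_le {A : Matrix (Fin d) (Fin d) ℂ} (x : Fin d → ℂ) :
    (qf A x).re ≤ Nn A * Sn x :=
  le_trans (Complex.re_le_norm _) (abs_qf_le A x)

lemma effect_of_qf_le {A : Matrix (Fin d) (Fin d) ℂ} (hA : A.PosSemidef) {t : ℝ} (ht : 0 < t)
    (h : ∀ x, (qf A x).re ≤ t * Sn x) : IsEffect (((t⁻¹ : ℝ) : ℂ) • A) := by
  refine ⟨smul_psd (inv_nonneg.mpr ht.le) hA, ?_⟩
  have hid : (1 : Matrix (Fin d) (Fin d) ℂ) - ((t⁻¹ : ℝ) : ℂ) • A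
      = ((t⁻¹ : ℝ) : ℂ) • ((t : ℂ) • 1 - A) := by
    rw [smul_sub, smul_smul, ← Complex.ofReal_mul, inv_mul_cancel₀ ht.ne', Complex.ofReal_one,
      one_smul]
  rw [hid]
  exact smul_psd (inv_nonneg.mpr ht.le) (smul_one_sub_psd hA.1 h)

lemma effect_inv_smul {A : Matrix (Fin d) (Fin d) ℂ} (hA : A.PosSemidef) {t : ℝ}
    (ht : Nn A + 1 ≤ t) : IsEffect (((t⁻¹ : ℝ) : ℂ) • A) := by
  have hN := Nn_nonneg A
  refine effect_of_qf_le hA (by linarith) fun x => ?_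
  have := psd_qf_le (A := A) x
  nlinarith [Sn_nonneg x]

lemma effect_one : IsEffect (1 : Matrix (Fin d) (Fin d) ℂ) := ⟨.one, by simpa using Matrix.PosSemidef.zero⟩

lemma effect_zero : IsEffect (0 : Matrix (Fin d) (Fin d) ℂ) := ⟨.zero, by simpa using Matrix.PosSemidef.one⟩

lemma effect_one_sub {E : Matrix (Fin d) (Fin d) ℂ} (hE : IsEffect E) : IsEffect (1 - E) :=
  ⟨hE.2, by simpa using hE.1⟩

lemma effect_smul {c : ℝ} (hc0 : 0 ≤ c) (hc1 : c ≤ 1) {E : Matrix (Fin d) (Fin d) ℂ}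
    (hE : IsEffect E) : IsEffect ((c : ℂ) • E) := by
  refine ⟨smul_psd hc0 hE.1, ?_⟩
  have hid : (1 : Matrix (Fin d) (Fin d) ℂ) - (c : ℂ) • E
      = (c : ℂ) • (1 - E) + (((1 - c : ℝ)) : ℂ) • 1 := by
    push_cast
    module
  rw [hid]
  exact (smul_psd hc0 hE.2).add (smul_psd (by linarith) .one)


section FrameFn
variable {f : Matrix (Fin d) (Fin d) ℂ → ℝ}


lemma f_one (hf : IsFrameFunction f) : f 1 = 1 := by
  have := hf.2 1 (fun _ => 1) (fun _ => effect_one) (by simp)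
  simpa using this

lemma f_zero (hf : IsFrameFunction f) : f 0 = 0 := by
  have := hf.2 2 ![1, 0] (by intro j; fin_cases j <;> simp [effect_one, effect_zero])
    (by simp [Fin.sum_univ_two])
  rw [Fin.sum_univ_two] at this
  simp only [Matrix.cons_val_zero, Matrix.cons_val_one, Matrix.head_cons] at this
  have h1 := f_one hf
  linarith

lemma f_nonneg (hf : IsFrameFunction f) {E : Matrix (Fin d) (Fin d) ℂ} (hE : IsEffect E) :
    0 ≤ f E := (hf.1 E hE).1

lemma f_le_one (hf : IsFrameFunction f) {E : Matrix (Fin d) (Fin d) ℂ} (hE : IsEffect E) :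
    f E ≤ 1 := (hf.1 E hE).2

lemma f_add (hf : IsFrameFunction f) {A B : Matrix (Fin d) (Fin d) ℂ} (hA : IsEffect A)
    (hB : IsEffect B) (hAB : IsEffect (A + B)) : f (A + B) = f A + f B := by
  have hC : IsEffect (1 - (A + B)) := effect_one_sub hAB
  have h3 := hf.2 3 ![A, B, 1 - (A + B)]
    (by intro j
        fin_cases j
        · simpa using hA
        · simpa using hB
        · simpa using hC) (by
      rw [Fin.sum_univ_three]
      simp only [Matrix.cons_val_zero, Matrix.cons_val_one, Matrix.head_cons,
        Matrix.cons_val_two, Matrix.tail_cons]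
      abel)
  have h2 := hf.2 2 ![A + B, 1 - (A + B)]
    (by intro j
        fin_cases j
        · simpa using hAB
        · simpa using hC) (by
      rw [Fin.sum_univ_two]
      simp only [Matrix.cons_val_zero, Matrix.cons_val_one, Matrix.head_cons]
      abel)
  rw [Fin.sum_univ_three] at h3
  rw [Fin.sum_univ_two] at h2
  simp only [Matrix.cons_val_zero, Matrix.cons_val_one, Matrix.head_cons,
    Matrix.cons_val_two, Matrix.tail_cons] at h3 h2
  linarith

lemma f_mono (hf : IsFrameFunction f) {A B : Matrix (Fin d) (Fin d) ℂ} (hA : IsEffect A)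
    (hB : IsEffect B) (hBA : (B - A).PosSemidef) : f A ≤ f B := by
  have hE : IsEffect (B - A) := by
    refine ⟨hBA, ?_⟩
    have : (1 : Matrix (Fin d) (Fin d) ℂ) - (B - A) = (1 - B) + A := by abel
    rw [this]
    exact hB.2.add hA.1
  have hid : A + (B - A) = B := by abel
  have := f_add hf hA hE (by rw [hid]; exact hB)
  rw [hid] at this
  linarith [f_nonneg hf hE]

lemma f_nat_div (hf : IsFrameFunction f) {E : Matrix (Fin d) (Fin d) ℂ} (hE : IsEffect E)
    {n : ℕ} (hn : 0 < n) : ∀ k : ℕ, k ≤ n →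
      f ((((k : ℝ) / n : ℝ) : ℂ) • E) = k * f ((((1 : ℝ) / n : ℝ) : ℂ) • E) := by
  intro k
  induction k with
  | zero =>
    intro _
    norm_num
    exact f_zero hf
  | succ k ih =>
    intro hk
    have hkn : (k : ℝ) / n ≤ 1 := by
      rw [div_le_one (by positivity)]
      exact_mod_cast le_trans (Nat.le_succ k) hk
    have hk1n : ((k + 1 : ℕ) : ℝ) / n ≤ 1 := by
      rw [div_le_one (by positivity)]
      exact_mod_cast hk
    have h1n : (1 : ℝ) / n ≤ 1 := by
      rw [div_le_one (by positivity)]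
      exact_mod_cast hn
    have e1 := effect_smul (by positivity) hkn hE
    have e2 := effect_smul (by positivity) h1n hE
    have e3 := effect_smul (by positivity) hk1n hE
    have hsplit : ((((k + 1 : ℕ) : ℝ) / n : ℝ) : ℂ) • E
        = (((k : ℝ) / n : ℝ) : ℂ) • E + (((1 : ℝ) / n : ℝ) : ℂ) • E := by
      rw [← add_smul]
      norm_cast
      rw [← add_div]
      push_cast
      ring_nf
    rw [hsplit]
    rw [f_add hf e1 e2 (by rw [← hsplit]; exact e3)]
    rw [ih (le_trans (Nat.le_succ k) hk)]
    push_cast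
    ring

lemma f_frac (hf : IsFrameFunction f) {E : Matrix (Fin d) (Fin d) ℂ} (hE : IsEffect E)
    {m n : ℕ} (hn : 0 < n) (hmn : m ≤ n) :
    f ((((m : ℝ) / n : ℝ) : ℂ) • E) = ((m : ℝ) / n) * f E := by
  have h1 := f_nat_div hf hE hn m hmn
  have h2 := f_nat_div hf hE hn n le_rfl
  have hnn : ((n : ℝ) / n : ℝ) = 1 := div_self (by positivity)
  rw [hnn] at h2
  simp only [Complex.ofReal_one, one_smul] at h2
  rw [h1, h2]
  field_simp

lemma f_rat (hf : IsFrameFunction f) {E : Matrix (Fin d) (Fin d) ℂ} (hE : IsEffect E)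
    {q : ℚ} (h0 : 0 ≤ q) (h1 : q ≤ 1) : f (((q : ℝ) : ℂ) • E) = (q : ℝ) * f E := by
  have hden : (0 : ℕ) < q.den := q.pos
  have hnum : (0 : ℤ) ≤ q.num := Rat.num_nonneg.mpr h0
  have hcast : ((q : ℝ)) = ((q.num.toNat : ℝ)) / (q.den : ℝ) := by
    rw [Rat.cast_def]
    congr 1
    exact_mod_cast (Int.toNat_of_nonneg hnum).symm
  have hmn : q.num.toNat ≤ q.den := by
    have hq1 : (q : ℝ) ≤ 1 := by exact_mod_cast h1
    rw [hcast, div_le_one (by positivity)] at hq1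
    exact_mod_cast hq1
  rw [hcast]
  exact f_frac hf hE hden hmn

lemma f_real_smul (hf : IsFrameFunction f) {E : Matrix (Fin d) (Fin d) ℂ} (hE : IsEffect E)
    {c : ℝ} (h0 : 0 ≤ c) (h1 : c ≤ 1) : f ((c : ℂ) • E) = c * f E := by
  have hfE0 := f_nonneg hf hE
  have hfE1 := f_le_one hf hE
  refine le_antisymm ?_ ?_
  · rcases eq_or_lt_of_le h1 with rfl | hlt
    · simp
    refine le_of_forall_pos_le_add fun ε hε => ?_
    obtain ⟨q, hq1, hq2⟩ := exists_rat_btwn (lt_min hlt (lt_add_of_pos_right c hε))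
    have hq0 : (0 : ℝ) ≤ (q : ℝ) := le_of_lt (lt_of_le_of_lt h0 hq1)
    have hql : (q : ℝ) ≤ 1 := le_of_lt (lt_min_iff.mp hq2).1
    have hqe : (q : ℝ) < c + ε := (lt_min_iff.mp hq2).2
    have heq := f_rat hf hE (by exact_mod_cast hq0) (by exact_mod_cast hql)
    have hmono : f ((c : ℂ) • E) ≤ f (((q : ℝ) : ℂ) • E) := by
      refine f_mono hf (effect_smul h0 h1 hE) (effect_smul hq0 hql hE) ?_
      have hid : ((q : ℝ) : ℂ) • E - (c : ℂ) • E = (((q : ℝ) - c : ℝ) : ℂ) • E := by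
        push_cast
        rw [sub_smul]
      rw [hid]
      exact smul_psd (by linarith) hE.1
    have h5 : (q : ℝ) * f E ≤ c * f E + ε := by
      nlinarith [mul_nonneg (show (0:ℝ) ≤ (q:ℝ) - c by linarith) (show (0:ℝ) ≤ 1 - f E by linarith)]
    linarith [hmono, h5, heq.symm.le, heq.le]
  · rcases eq_or_lt_of_le h0 with rfl | hlt
    · simp [f_zero hf]
    refine le_of_forall_pos_le_add fun ε hε => ?_
    obtain ⟨q, hq1, hq2⟩ := exists_rat_btwn (show max 0 (c - ε) < c from max_lt hlt (by linarith))
    have hq0 : (0 : ℝ) ≤ (q : ℝ) := le_of_lt (lt_of_le_of_lt (le_max_left _ _) hq1)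
    have hqe : c - ε < (q : ℝ) := lt_of_le_of_lt (le_max_right _ _) hq1
    have hql : (q : ℝ) ≤ 1 := le_of_lt (lt_of_lt_of_le hq2 h1)
    have heq := f_rat hf hE (by exact_mod_cast hq0) (by exact_mod_cast hql)
    have hmono : f (((q : ℝ) : ℂ) • E) ≤ f ((c : ℂ) • E) := by
      refine f_mono hf (effect_smul hq0 hql hE) (effect_smul h0 h1 hE) ?_
      have hid : (c : ℂ) • E - ((q : ℝ) : ℂ) • E = ((c - (q : ℝ) : ℝ) : ℂ) • E := by
        push_cast
        rw [sub_smul]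
      rw [hid]
      exact smul_psd (by linarith) hE.1
    have h5 : c * f E ≤ (q : ℝ) * f E + ε := by
      nlinarith [mul_nonneg (show (0:ℝ) ≤ c - (q:ℝ) by linarith) (show (0:ℝ) ≤ 1 - f E by linarith)]
    linarith [hmono, h5, heq.le, heq.symm.le]

end FrameFn


section Gfun
variable {f : Matrix (Fin d) (Fin d) ℂ → ℝ}

noncomputable def gfun (f : Matrix (Fin d) (Fin d) ℂ → ℝ) (A : Matrix (Fin d) (Fin d) ℂ) : ℝ :=
  (Nn A + 1) * f ((((Nn A + 1)⁻¹ : ℝ) : ℂ) • A)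

lemma g_eq (hf : IsFrameFunction f) {A : Matrix (Fin d) (Fin d) ℂ} (hA : A.PosSemidef)
    {t : ℝ} (ht : Nn A + 1 ≤ t) : gfun f A = t * f (((t⁻¹ : ℝ) : ℂ) • A) := by
  have hN := Nn_nonneg A
  have hs : (0 : ℝ) < Nn A + 1 := by linarith
  have htp : (0 : ℝ) < t := by linarith
  have hE : IsEffect ((((Nn A + 1)⁻¹ : ℝ) : ℂ) • A) := effect_inv_smul hA le_rfl
  have hc0 : (0 : ℝ) ≤ (Nn A + 1) / t := by positivity
  have hc1 : (Nn A + 1) / t ≤ 1 := (div_le_one htp).mpr ht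
  have hid : ((t⁻¹ : ℝ) : ℂ) • A
      = ((((Nn A + 1) / t : ℝ)) : ℂ) • ((((Nn A + 1)⁻¹ : ℝ) : ℂ) • A) := by
    rw [smul_smul, ← Complex.ofReal_mul]
    congr 2
    field_simp
  rw [hid, f_real_smul hf hE hc0 hc1, gfun]
  field_simp

lemma g_add (hf : IsFrameFunction f) {A B : Matrix (Fin d) (Fin d) ℂ}
    (hA : A.PosSemidef) (hB : B.PosSemidef) : gfun f (A + B) = gfun f A + gfun f B := by
  have hNA := Nn_nonneg A
  have hNB := Nn_nonneg B
  have hNsub : Nn (A + B) ≤ Nn A + Nn B := by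
    rw [Nn, Nn, Nn, ← Finset.sum_add_distrib]
    refine Finset.sum_le_sum fun i _ => ?_
    rw [← Finset.sum_add_distrib]
    refine Finset.sum_le_sum fun j _ => ?_
    exact (norm_add_le _ _)
  set t : ℝ := Nn A + Nn B + 1 with htdef
  have ht : (0 : ℝ) < t := by positivity
  have h1 : gfun f (A + B) = t * f (((t⁻¹ : ℝ) : ℂ) • (A + B)) :=
    g_eq hf (hA.add hB) (by linarith)
  have h2 : gfun f A = t * f (((t⁻¹ : ℝ) : ℂ) • A) := g_eq hf hA (by linarith)
  have h3 : gfun f B = t * f (((t⁻¹ : ℝ) : ℂ) • B) := g_eq hf hB (by linarith)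
  have hEA : IsEffect (((t⁻¹ : ℝ) : ℂ) • A) := effect_inv_smul hA (by linarith)
  have hEB : IsEffect (((t⁻¹ : ℝ) : ℂ) • B) := effect_inv_smul hB (by linarith)
  have hEAB : IsEffect (((t⁻¹ : ℝ) : ℂ) • A + ((t⁻¹ : ℝ) : ℂ) • B) := by
    rw [← smul_add]
    exact effect_inv_smul (hA.add hB) (by linarith)
  rw [h1, h2, h3, smul_add, f_add hf hEA hEB hEAB]
  ring

lemma g_smul (hf : IsFrameFunction f) {A : Matrix (Fin d) (Fin d) ℂ} (hA : A.PosSemidef)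
    {c : ℝ} (hc : 0 ≤ c) : gfun f ((c : ℂ) • A) = c * gfun f A := by
  rcases eq_or_lt_of_le hc with rfl | hcpos
  · simp only [Complex.ofReal_zero, zero_smul, zero_mul]
    rw [gfun]
    have : Nn (0 : Matrix (Fin d) (Fin d) ℂ) = 0 := by
      simp [Nn]
    rw [this]
    simp [f_zero hf]
  · have hNA := Nn_nonneg A
    have hNcA : Nn ((c : ℂ) • A) = c * Nn A := by
      rw [Nn, Nn, Finset.mul_sum]
      refine Finset.sum_congr rfl fun i _ => ?_
      rw [Finset.mul_sum]
      refine Finset.sum_congr rfl fun j _ => ?_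
      simp [Matrix.smul_apply, _root_.map_mul, Complex.norm_real, abs_of_nonneg hc]
    set t : ℝ := c * (Nn A + 1) + 1 with htdef
    have ht : (0 : ℝ) < t := by positivity
    have h1 : gfun f ((c : ℂ) • A) = t * f (((t⁻¹ : ℝ) : ℂ) • ((c : ℂ) • A)) := by
      refine g_eq hf (smul_psd hc hA) ?_
      rw [hNcA]
      nlinarith
    have h2 : gfun f A = (t / c) * f ((((t / c)⁻¹ : ℝ) : ℂ) • A) := by
      refine g_eq hf hA ?_
      rw [le_div_iff₀ hcpos]
      nlinarith
    have hid : ((t⁻¹ : ℝ) : ℂ) • ((c : ℂ) • A) = (((t / c)⁻¹ : ℝ) : ℂ) • A := by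
      rw [smul_smul, ← Complex.ofReal_mul]
      congr 2
      field_simp
    rw [h1, h2, hid]
    field_simp

lemma g_nonneg (hf : IsFrameFunction f) {A : Matrix (Fin d) (Fin d) ℂ} (hA : A.PosSemidef) :
    0 ≤ gfun f A := by
  have hN := Nn_nonneg A
  exact mul_nonneg (by linarith) (f_nonneg hf (effect_inv_smul hA le_rfl))

lemma g_effect (hf : IsFrameFunction f) {E : Matrix (Fin d) (Fin d) ℂ} (hE : IsEffect E) :
    gfun f E = f E := by
  have hN := Nn_nonneg E
  have hs : (0 : ℝ) < Nn E + 1 := by linarith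
  have h9 : (Nn E + 1)⁻¹ ≤ 1 := by
    have h8 := mul_inv_cancel₀ hs.ne'
    nlinarith [mul_nonneg hN (inv_nonneg.mpr hs.le)]
  rw [gfun, f_real_smul hf hE (by positivity) h9]
  field_simp

lemma g_one (hf : IsFrameFunction f) : gfun f (1 : Matrix (Fin d) (Fin d) ℂ) = 1 := by
  rw [g_effect hf effect_one, f_one hf]

lemma g_smul_one (hf : IsFrameFunction f) {c : ℝ} (hc : 0 ≤ c) :
    gfun f ((c : ℂ) • (1 : Matrix (Fin d) (Fin d) ℂ)) = c := by
  rw [g_smul hf (.one) hc, g_one hf, mul_one]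

end Gfun


section Phi
variable {f : Matrix (Fin d) (Fin d) ℂ → ℝ}

noncomputable def ph (f : Matrix (Fin d) (Fin d) ℂ → ℝ) (A : Matrix (Fin d) (Fin d) ℂ) : ℝ :=
  gfun f (A + (((Nn A + 1 : ℝ)) : ℂ) • 1) - (Nn A + 1)

lemma phi_eq (hf : IsFrameFunction f) {A : Matrix (Fin d) (Fin d) ℂ} (hA : A.IsHermitian)
    {c : ℝ} (hc : 0 ≤ c) (hpsd : (A + (c : ℂ) • 1).PosSemidef) :
    ph f A = gfun f (A + (c : ℂ) • 1) - c := by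
  have hN := Nn_nonneg A
  set b : ℝ := Nn A + 1 with hbdef
  have hb : (0 : ℝ) ≤ b := by positivity
  have hAb : (A + (b : ℂ) • 1).PosSemidef := herm_add_smul_psd hA (by linarith)
  have key : gfun f ((A + (b : ℂ) • 1) + (c : ℂ) • 1)
      = gfun f (A + (b : ℂ) • 1) + c := by
    rw [g_add hf hAb (smul_psd hc .one), g_smul_one hf hc]
  have key2 : gfun f ((A + (c : ℂ) • 1) + (b : ℂ) • 1)
      = gfun f (A + (c : ℂ) • 1) + b := by
    rw [g_add hf hpsd (smul_psd hb .one), g_smul_one hf hb]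
  have hcomm : (A + (b : ℂ) • 1) + (c : ℂ) • 1 = (A + (c : ℂ) • 1) + (b : ℂ) • 1 := by abel
  rw [hcomm] at key
  rw [ph, ← hbdef]
  linarith [key, key2]

lemma phi_psd (hf : IsFrameFunction f) {A : Matrix (Fin d) (Fin d) ℂ} (hA : A.PosSemidef) :
    ph f A = gfun f A := by
  have := phi_eq hf hA.1 le_rfl (c := 0) (by simpa using hA)
  simpa using this

lemma phi_zero (hf : IsFrameFunction f) : ph f (0 : Matrix (Fin d) (Fin d) ℂ) = 0 := by
  rw [phi_psd hf .zero]
  have : Nn (0 : Matrix (Fin d) (Fin d) ℂ) = 0 := by simp [Nn]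
  rw [gfun, this]
  simp [f_zero hf]

lemma phi_add (hf : IsFrameFunction f) {A B : Matrix (Fin d) (Fin d) ℂ}
    (hA : A.IsHermitian) (hB : B.IsHermitian) : ph f (A + B) = ph f A + ph f B := by
  have hNA := Nn_nonneg A
  have hNB := Nn_nonneg B
  set a : ℝ := Nn A + 1
  set b : ℝ := Nn B + 1
  have hPA : (A + (a : ℂ) • 1).PosSemidef := herm_add_smul_psd hA (by simp [a])
  have hPB : (B + (b : ℂ) • 1).PosSemidef := herm_add_smul_psd hB (by simp [b])
  have hsplit : (A + B) + ((a + b : ℝ) : ℂ) • 1 = (A + (a : ℂ) • 1) + (B + (b : ℂ) • 1) := by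
    push_cast
    module
  have h1 : ph f (A + B) = gfun f ((A + B) + ((a + b : ℝ) : ℂ) • 1) - (a + b) := by
    refine phi_eq hf (hA.add hB) (by positivity) ?_
    rw [hsplit]
    exact hPA.add hPB
  rw [h1, hsplit, g_add hf hPA hPB]
  have h2 : ph f A = gfun f (A + (a : ℂ) • 1) - a := phi_eq hf hA (by positivity) hPA
  have h3 : ph f B = gfun f (B + (b : ℂ) • 1) - b := phi_eq hf hB (by positivity) hPB
  linarith

lemma phi_smul_nonneg (hf : IsFrameFunction f) {A : Matrix (Fin d) (Fin d) ℂ}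
    (hA : A.IsHermitian) {c : ℝ} (hc : 0 ≤ c) : ph f ((c : ℂ) • A) = c * ph f A := by
  rcases eq_or_lt_of_le hc with rfl | hcpos
  · simpa using phi_zero hf
  · have hNA := Nn_nonneg A
    set a : ℝ := Nn A + 1
    have hPA : (A + (a : ℂ) • 1).PosSemidef := herm_add_smul_psd hA (by simp [a])
    have hsplit : (c : ℂ) • A + ((c * a : ℝ) : ℂ) • 1 = (c : ℂ) • (A + (a : ℂ) • 1) := by
      push_cast
      module
    have h1 : ph f ((c : ℂ) • A) = gfun f ((c : ℂ) • A + ((c * a : ℝ) : ℂ) • 1) - c * a := by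
      refine phi_eq hf (herm_smul_real hA) (by positivity) ?_
      rw [hsplit]
      exact smul_psd hc hPA
    rw [h1, hsplit, g_smul hf hPA hc]
    have h2 : ph f A = gfun f (A + (a : ℂ) • 1) - a := phi_eq hf hA (by positivity) hPA
    rw [h2]
    ring

lemma phi_neg (hf : IsFrameFunction f) {A : Matrix (Fin d) (Fin d) ℂ} (hA : A.IsHermitian) :
    ph f (-A) = - ph f A := by
  have h := phi_add hf hA hA.neg
  rw [add_neg_cancel, phi_zero hf] at h
  linarith

lemma phi_smul_real (hf : IsFrameFunction f) {A : Matrix (Fin d) (Fin d) ℂ}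
    (hA : A.IsHermitian) (c : ℝ) : ph f ((c : ℂ) • A) = c * ph f A := by
  rcases le_or_gt 0 c with hc | hc
  · exact phi_smul_nonneg hf hA hc
  · have h1 : ph f (((-c : ℝ) : ℂ) • (-A)) = (-c) * ph f (-A) :=
      phi_smul_nonneg hf hA.neg (by linarith)
    have hid : (((-c : ℝ)) : ℂ) • (-A) = (c : ℂ) • A := by
      push_cast
      module
    rw [hid] at h1
    rw [h1, phi_neg hf hA]
    ring

lemma phi_effect (hf : IsFrameFunction f) {E : Matrix (Fin d) (Fin d) ℂ} (hE : IsEffect E) :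
    ph f E = f E := by
  rw [phi_psd hf hE.1, g_effect hf hE]

end Phi


section PhiC
variable {f : Matrix (Fin d) (Fin d) ℂ → ℝ}

noncomputable def reH (M : Matrix (Fin d) (Fin d) ℂ) : Matrix (Fin d) (Fin d) ℂ :=
  (2 : ℂ)⁻¹ • (M + Mᴴ)

noncomputable def imH (M : Matrix (Fin d) (Fin d) ℂ) : Matrix (Fin d) (Fin d) ℂ :=
  (2 * Complex.I)⁻¹ • (M - Mᴴ)

lemma inv_two_I : (2 * Complex.I)⁻¹ = -(2⁻¹ : ℂ) * Complex.I := by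
  refine inv_eq_of_mul_eq_one_right ?_
  linear_combination (-1 : ℂ) * Complex.I_mul_I

lemma reH_herm (M : Matrix (Fin d) (Fin d) ℂ) : (reH M).IsHermitian := by
  show _ = _
  rw [reH, conjTranspose_smul, conjTranspose_add, conjTranspose_conjTranspose]
  have : star ((2 : ℂ)⁻¹) = (2 : ℂ)⁻¹ := by
    simp [Complex.star_def]
  rw [this, add_comm]

lemma imH_herm (M : Matrix (Fin d) (Fin d) ℂ) : (imH M).IsHermitian := by
  show _ = _
  rw [imH, conjTranspose_smul, conjTranspose_sub, conjTranspose_conjTranspose]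
  have h1 : star ((2 * Complex.I)⁻¹) = -((2 * Complex.I)⁻¹) := by
    rw [inv_two_I]
    simp [Complex.star_def, Complex.conj_I]
  rw [h1]
  rw [neg_smul, ← smul_neg, neg_sub]

lemma reH_add (M N : Matrix (Fin d) (Fin d) ℂ) : reH (M + N) = reH M + reH N := by
  rw [reH, reH, reH, conjTranspose_add]
  module

lemma imH_add (M N : Matrix (Fin d) (Fin d) ℂ) : imH (M + N) = imH M + imH N := by
  rw [imH, imH, imH, conjTranspose_add]
  module

lemma reH_decomp (M : Matrix (Fin d) (Fin d) ℂ) : reH M + Complex.I • imH M = M := by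
  rw [reH, imH, smul_smul, inv_two_I]
  have hsc : Complex.I * (-(2⁻¹ : ℂ) * Complex.I) = 2⁻¹ := by
    linear_combination (-(2⁻¹ : ℂ)) * Complex.I_mul_I
  rw [hsc]
  module

lemma reH_of_herm {M : Matrix (Fin d) (Fin d) ℂ} (hM : M.IsHermitian) : reH M = M := by
  rw [reH, hM.eq]
  module

lemma imH_of_herm {M : Matrix (Fin d) (Fin d) ℂ} (hM : M.IsHermitian) : imH M = 0 := by
  rw [imH, hM.eq]
  simp

lemma reH_real_smul (r : ℝ) (M : Matrix (Fin d) (Fin d) ℂ) :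
    reH ((r : ℂ) • M) = (r : ℂ) • reH M := by
  rw [reH, reH, conjTranspose_smul]
  have : star ((r : ℝ) : ℂ) = ((r : ℝ) : ℂ) := by simp [Complex.star_def, Complex.conj_ofReal]
  rw [this]
  module

lemma imH_real_smul (r : ℝ) (M : Matrix (Fin d) (Fin d) ℂ) :
    imH ((r : ℂ) • M) = (r : ℂ) • imH M := by
  rw [imH, imH, conjTranspose_smul]
  have : star ((r : ℝ) : ℂ) = ((r : ℝ) : ℂ) := by simp [Complex.star_def, Complex.conj_ofReal]
  rw [this]
  module

lemma reH_I_smul (M : Matrix (Fin d) (Fin d) ℂ) : reH (Complex.I • M) = -imH M := by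
  rw [reH, imH, conjTranspose_smul, inv_two_I]
  have : star Complex.I = -Complex.I := by simp [Complex.star_def, Complex.conj_I]
  rw [this]
  module

lemma imH_I_smul (M : Matrix (Fin d) (Fin d) ℂ) : imH (Complex.I • M) = reH M := by
  rw [imH, reH, conjTranspose_smul, inv_two_I]
  have h1 : star Complex.I = -Complex.I := by simp [Complex.star_def, Complex.conj_I]
  rw [h1]
  have h2 : (-(2⁻¹ : ℂ) * Complex.I) • (Complex.I • M - -Complex.I • Mᴴ)
      = (2⁻¹ : ℂ) • (M + Mᴴ) := by
    rw [smul_sub, smul_smul, smul_smul]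
    have e1 : -(2⁻¹ : ℂ) * Complex.I * Complex.I = 2⁻¹ := by
      linear_combination (-(2⁻¹ : ℂ)) * Complex.I_mul_I
    have e2 : -(2⁻¹ : ℂ) * Complex.I * -Complex.I = -(2⁻¹ : ℂ) := by
      linear_combination ((2⁻¹ : ℂ)) * Complex.I_mul_I
    rw [e1, e2]
    module
  rw [h2]

noncomputable def PhiC (f : Matrix (Fin d) (Fin d) ℂ → ℝ) (M : Matrix (Fin d) (Fin d) ℂ) : ℂ :=
  (ph f (reH M) : ℂ) + Complex.I * (ph f (imH M) : ℂ)

lemma PhiC_herm (hf : IsFrameFunction f) {M : Matrix (Fin d) (Fin d) ℂ} (hM : M.IsHermitian) :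
    PhiC f M = (ph f M : ℂ) := by
  rw [PhiC, reH_of_herm hM, imH_of_herm hM, phi_zero hf]
  simp

lemma PhiC_zero (hf : IsFrameFunction f) : PhiC f (0 : Matrix (Fin d) (Fin d) ℂ) = 0 := by
  rw [PhiC_herm hf (by simp [Matrix.IsHermitian]), phi_zero hf]
  simp

lemma PhiC_add (hf : IsFrameFunction f) (M N : Matrix (Fin d) (Fin d) ℂ) :
    PhiC f (M + N) = PhiC f M + PhiC f N := by
  rw [PhiC, PhiC, PhiC, reH_add, imH_add, phi_add hf (reH_herm M) (reH_herm N),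
    phi_add hf (imH_herm M) (imH_herm N)]
  push_cast
  ring

lemma PhiC_real_smul (hf : IsFrameFunction f) (r : ℝ) (M : Matrix (Fin d) (Fin d) ℂ) :
    PhiC f ((r : ℂ) • M) = r * PhiC f M := by
  rw [PhiC, PhiC, reH_real_smul, imH_real_smul, phi_smul_real hf (reH_herm M),
    phi_smul_real hf (imH_herm M)]
  push_cast
  ring

lemma PhiC_I_smul (hf : IsFrameFunction f) (M : Matrix (Fin d) (Fin d) ℂ) :
    PhiC f (Complex.I • M) = Complex.I * PhiC f M := by
  rw [PhiC, PhiC, reH_I_smul, imH_I_smul]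
  have h1 : ph f (-imH M) = - ph f (imH M) := phi_neg hf (imH_herm M)
  rw [h1]
  push_cast
  linear_combination (-((ph f (imH M) : ℝ) : ℂ)) * Complex.I_mul_I

lemma PhiC_smul (hf : IsFrameFunction f) (z : ℂ) (M : Matrix (Fin d) (Fin d) ℂ) :
    PhiC f (z • M) = z * PhiC f M := by
  have hz : z • M = ((z.re : ℝ) : ℂ) • M + ((z.im : ℝ) : ℂ) • (Complex.I • M) := by
    rw [smul_smul, ← add_smul]
    congr 1
    simpa using (Complex.re_add_im z).symm
  rw [hz, PhiC_add hf, PhiC_real_smul hf, PhiC_real_smul hf, PhiC_I_smul hf]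
  linear_combination (PhiC f M) * (Complex.re_add_im z)

lemma PhiC_conjTranspose (hf : IsFrameFunction f) (M : Matrix (Fin d) (Fin d) ℂ) :
    PhiC f Mᴴ = (starRingEnd ℂ) (PhiC f M) := by
  have hre : reH Mᴴ = reH M := by
    rw [reH, reH, conjTranspose_conjTranspose, add_comm]
  have him : imH Mᴴ = -imH M := by
    rw [imH, imH, conjTranspose_conjTranspose, ← smul_neg, neg_sub]
  rw [PhiC, PhiC, hre, him, phi_neg hf (imH_herm M)]
  simp [Complex.ext_iff]

end PhiC


section Wmat
variable {f : Matrix (Fin d) (Fin d) ℂ → ℝ}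

noncomputable def Wmat (f : Matrix (Fin d) (Fin d) ℂ → ℝ) : Matrix (Fin d) (Fin d) ℂ :=
  Matrix.of fun i j => PhiC f (Matrix.single j i (1 : ℂ))

lemma PhiC_sum (hf : IsFrameFunction f) {ι : Type*} (s : Finset ι)
    (g : ι → Matrix (Fin d) (Fin d) ℂ) :
    PhiC f (∑ i ∈ s, g i) = ∑ i ∈ s, PhiC f (g i) := by
  classical
  induction s using Finset.induction_on with
  | empty => simpa using PhiC_zero hf
  | insert _ _ hx ih =>
    rw [Finset.sum_insert hx, Finset.sum_insert hx, PhiC_add hf, ih]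

lemma trace_W_mul (hf : IsFrameFunction f) (M : Matrix (Fin d) (Fin d) ℂ) :
    (Wmat f * M).trace = PhiC f M := by
  have hM : M = ∑ i : Fin d, ∑ j : Fin d, Matrix.single i j (M i j) :=
    matrix_eq_sum_single M
  conv_rhs => rw [hM]
  rw [PhiC_sum hf]
  have h1 : ∀ i : Fin d, PhiC f (∑ j : Fin d, Matrix.single i j (M i j))
      = ∑ j : Fin d, M i j * PhiC f (Matrix.single i j 1) := by
    intro i
    rw [PhiC_sum hf]
    refine Finset.sum_congr rfl fun j _ => ?_
    have : Matrix.single i j (M i j) = M i j • Matrix.single i j (1 : ℂ) := by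
      rw [smul_single, smul_eq_mul, mul_one]
    rw [this, PhiC_smul hf]
  simp_rw [h1]
  rw [Matrix.trace]
  simp_rw [Matrix.diag, mul_apply]
  rw [Finset.sum_comm]
  refine Finset.sum_congr rfl fun i _ => Finset.sum_congr rfl fun j _ => ?_
  rw [Wmat]
  simp only [Matrix.of_apply]
  ring

lemma stdBasis_conjT (i j : Fin d) :
    (Matrix.single i j (1 : ℂ))ᴴ = Matrix.single j i (1 : ℂ) := by
  ext a b
  simp only [conjTranspose_apply, Matrix.single, Matrix.of_apply]
  split_ifs with h1 h2 h2 <;> simp_all [and_comm] <;> tauto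

lemma W_herm (hf : IsFrameFunction f) : (Wmat f).IsHermitian := by
  ext i j
  rw [conjTranspose_apply, Wmat]
  simp only [Matrix.of_apply]
  rw [Complex.star_def, ← PhiC_conjTranspose hf, stdBasis_conjT]

lemma outer_herm (x : Fin d → ℂ) : (vecMulVec x (star x)).IsHermitian := by
  ext i j
  simp only [conjTranspose_apply, vecMulVec_apply, Pi.star_apply, Complex.star_def]
  rw [_root_.map_mul]
  simp [mul_comm]

lemma outer_psd (x : Fin d → ℂ) : (vecMulVec x (star x)).PosSemidef := by
  refine psd_of_re_nonneg (outer_herm x) fun y => ?_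
  have hz : qf (vecMulVec x (star x)) y
      = (∑ i, (starRingEnd ℂ) (y i) * x i) * (∑ j, (starRingEnd ℂ) (x j) * y j) := by
    rw [qf_expand, Finset.sum_mul_sum]
    refine Finset.sum_congr rfl fun i _ => Finset.sum_congr rfl fun j _ => ?_
    simp only [vecMulVec_apply, Pi.star_apply, Complex.star_def]
    ring
  have hconj : (∑ j, (starRingEnd ℂ) (x j) * y j)
      = (starRingEnd ℂ) (∑ i, (starRingEnd ℂ) (y i) * x i) := by
    rw [map_sum]
    refine Finset.sum_congr rfl fun i _ => ?_
    rw [_root_.map_mul, starRingEnd_self_apply]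
    ring
  rw [hz, hconj, Complex.mul_conj]
  simp [Complex.normSq_nonneg]

lemma qf_W_eq (hf : IsFrameFunction f) (x : Fin d → ℂ) :
    qf (Wmat f) x = PhiC f (vecMulVec x (star x)) := by
  rw [← trace_W_mul hf, qf_expand, Matrix.trace]
  simp_rw [Matrix.diag, mul_apply, vecMulVec_apply, Pi.star_apply, Complex.star_def]
  refine Finset.sum_congr rfl fun i _ => Finset.sum_congr rfl fun j _ => ?_
  ring

lemma W_psd (hf : IsFrameFunction f) : (Wmat f).PosSemidef := by
  refine psd_of_re_nonneg (W_herm hf) fun x => ?_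
  rw [qf_W_eq hf, PhiC_herm hf (outer_herm x), phi_psd hf (outer_psd x)]
  simpa using g_nonneg hf (outer_psd x)

lemma W_trace (hf : IsFrameFunction f) : (Wmat f).trace = 1 := by
  have h := trace_W_mul hf (1 : Matrix (Fin d) (Fin d) ℂ)
  rw [mul_one] at h
  rw [h, PhiC_herm hf isHermitian_one, phi_effect hf effect_one, f_one hf]
  simp

lemma W_rep (hf : IsFrameFunction f) {E : Matrix (Fin d) (Fin d) ℂ} (hE : IsEffect E) :
    ((f E : ℝ) : ℂ) = (Wmat f * E).trace := by
  rw [trace_W_mul hf, PhiC_herm hf hE.1.1, phi_effect hf hE]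

end Wmat


section Uniq
variable {f : Matrix (Fin d) (Fin d) ℂ → ℝ}

lemma herm_effect {H : Matrix (Fin d) (Fin d) ℂ} (hH : H.IsHermitian) :
    IsEffect ((((2 * (Nn H + 1))⁻¹ : ℝ) : ℂ) • (H + ((Nn H + 1 : ℝ) : ℂ) • 1)) := by
  have hN := Nn_nonneg H
  refine effect_of_qf_le (herm_add_smul_psd hH (by linarith)) (by linarith) fun x => ?_
  rw [qf_add, qf_smul, qf_one]
  have h1 := psd_qf_le (A := H) x
  have h2 := Sn_nonneg x
  simp only [Complex.add_re, Complex.re_ofReal_mul, Complex.ofReal_re]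
  nlinarith

lemma trace_D_herm_zero {D : Matrix (Fin d) (Fin d) ℂ}
    (hD : ∀ E : Matrix (Fin d) (Fin d) ℂ, IsEffect E → (D * E).trace = 0)
    {H : Matrix (Fin d) (Fin d) ℂ} (hH : H.IsHermitian) : (D * H).trace = 0 := by
  have hN := Nn_nonneg H
  have htr1 : D.trace = 0 := by
    have := hD 1 effect_one
    rwa [mul_one] at this
  have := hD _ (herm_effect hH)
  rw [Matrix.mul_smul, trace_smul, Matrix.mul_add, trace_add, Matrix.mul_smul, mul_one,
    trace_smul] at this
  have hne : (((2 * (Nn H + 1))⁻¹ : ℝ) : ℂ) ≠ 0 := by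
    simp only [ne_eq, Complex.ofReal_eq_zero, inv_eq_zero]
    positivity
  rw [smul_eq_zero] at this
  rcases this with h | h
  · exact absurd h hne
  · rw [htr1] at h
    simpa using h

lemma trace_D_all_zero {D : Matrix (Fin d) (Fin d) ℂ}
    (hD : ∀ E : Matrix (Fin d) (Fin d) ℂ, IsEffect E → (D * E).trace = 0)
    (M : Matrix (Fin d) (Fin d) ℂ) : (D * M).trace = 0 := by
  have h1 := trace_D_herm_zero hD (reH_herm M)
  have h2 := trace_D_herm_zero hD (imH_herm M)
  calc (D * M).trace = (D * (reH M + Complex.I • imH M)).trace := by rw [reH_decomp]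
    _ = (D * reH M).trace + Complex.I • (D * imH M).trace := by
        rw [Matrix.mul_add, trace_add, Matrix.mul_smul, trace_smul]
    _ = 0 := by rw [h1, h2]; simp

lemma trace_mul_std (D : Matrix (Fin d) (Fin d) ℂ) (i j : Fin d) :
    (D * Matrix.single j i (1 : ℂ)).trace = D i j := by
  rw [Matrix.trace]
  simp_rw [Matrix.diag, mul_apply, Matrix.single, Matrix.of_apply]
  rw [Finset.sum_comm]
  simp [Finset.sum_ite_eq, Finset.mem_univ, ite_and]

lemma D_eq_zero {D : Matrix (Fin d) (Fin d) ℂ}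
    (hD : ∀ E : Matrix (Fin d) (Fin d) ℂ, IsEffect E → (D * E).trace = 0) : D = 0 := by
  ext i j
  have := trace_D_all_zero hD (Matrix.single j i (1 : ℂ))
  rw [trace_mul_std] at this
  simpa using this

end Uniq
end BG

theorem busch_gleason {d : ℕ}
    (f : Matrix (Fin d) (Fin d) ℂ → ℝ) (hf : IsFrameFunction f) :
    ∃! W : Matrix (Fin d) (Fin d) ℂ,
      W.PosSemidef ∧ W.trace = 1 ∧
      ∀ E : Matrix (Fin d) (Fin d) ℂ, IsEffect E →
        (f E : ℂ) = (W * E).trace := by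
  refine ⟨BG.Wmat f, ⟨BG.W_psd hf, BG.W_trace hf, fun E hE => BG.W_rep hf hE⟩, ?_⟩
  rintro W' ⟨hpsd', htr', hrep'⟩
  have hD : ∀ E : Matrix (Fin d) (Fin d) ℂ, IsEffect E → ((W' - BG.Wmat f) * E).trace = 0 := by
    intro E hE
    rw [sub_mul, trace_sub, ← hrep' E hE, ← BG.W_rep hf hE]
    simp
  have := BG.D_eq_zero hD
  rw [sub_eq_zero] at this
  exact this
end

section
/- There is no frame function on the effects of C^d taking only the values 0 and 1; i.e., the Kochen–Specker result for POVMs: no truth-value assignment to effects is normalized on every POVM. -/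
open Matrix Finset ComplexOrder

lemma isEffect_smul_one {d : ℕ} {t : ℝ} (h₀ : 0 ≤ t) (h₁ : t ≤ 1) :
    IsEffect (t • 1 : Matrix (Fin d) (Fin d) ℂ) := by
  refine ⟨PosSemidef.one.smul h₀, ?_⟩
  have h : (1 - t • 1 : Matrix (Fin d) (Fin d) ℂ) = (1 - t) • 1 := by rw [sub_smul, one_smul]
  exact h ▸ PosSemidef.one.smul (sub_nonneg.mpr h₁)

lemma IsFrameFunction.apply_inv_smul_one {d : ℕ} {f : Matrix (Fin d) (Fin d) ℂ → ℝ}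
    (hf : IsFrameFunction f) {n : ℕ} (hn : 0 < n) :
    f ((n : ℝ)⁻¹ • 1) = (n : ℝ)⁻¹ := by
  have hn' : (n : ℝ) ≠ 0 := by positivity
  have h := hf.2 n (fun _ => (n : ℝ)⁻¹ • 1)
    (fun _ => isEffect_smul_one (by positivity) (inv_le_one_of_one_le₀ (by exact_mod_cast hn)))
    (by simp [Finset.sum_const, ← Nat.cast_smul_eq_nsmul ℝ, smul_smul, hn'])
  rw [Finset.sum_const, Finset.card_univ, Fintype.card_fin, nsmul_eq_mul] at h
  exact eq_inv_of_mul_eq_one_right h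

theorem no_two_valued_frame_function_general {d : ℕ} :
    ¬ ∃ f : Matrix (Fin d) (Fin d) ℂ → ℝ,
        IsFrameFunction f ∧
        ∀ E : Matrix (Fin d) (Fin d) ℂ, IsEffect E → f E = 0 ∨ f E = 1 := by
  rintro ⟨f, hf, htwo⟩
  have hhalf : f ((2 : ℝ)⁻¹ • 1) = 2⁻¹ := by exact_mod_cast hf.apply_inv_smul_one two_pos
  rcases htwo _ (isEffect_smul_one (t := 2⁻¹) (by norm_num) (by norm_num)) with h | h <;>
    rw [h] at hhalf <;> norm_num at hhalf

theorem no_two_valued_frame_function {d : ℕ} (hd : 2 ≤ d) :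
    ¬ ∃ f : Matrix (Fin d) (Fin d) ℂ → ℝ,
        IsFrameFunction f ∧
        ∀ E : Matrix (Fin d) (Fin d) ℂ, IsEffect E → f E = 0 ∨ f E = 1 :=
  no_two_valued_frame_function_general
end

section
/- For the tetrahedral vectors n̂₁ = e_x, n̂₂ = −(1/3)e_x − (2√2/3)e_z, n̂_{3,4} = −(1/3)e_x + (√2/3)e_z ± √(2/3)e_y, the quantity S_l = Σ_{j=1}^{4} (n_{j,x} + i n_{j,y})^l equals 1 + 3^{-l}[(−1)^l + 2(√7)^l cos(lα)] where e^{iα} = −1/√7 + i√(6/7); in particular S_l ≠ 0 for l = 3 and l = 4, and S_l = 0 for l = 1 and l = 2. -/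
/-!
The four vertices project to `1`, `-1/3`, `z` and `conj z` in the plane `n_x + i n_y`, with
`z = -1/3 + i √(2/3) = (√7/3) e^{iα}`. Hence `S_l = 1 + (-1/3)^l + 2 (√7/3)^l cos (lα)`.
For small `l` it is simpler to expand `(-1/3 ± q)^l` with `q = i √(2/3)`, `q^2 = -2/3`.
-/

open Complex Finset
open scoped ComplexConjugate

lemma pow_add_conj_pow_eq_two_mul_cos {z : ℂ} {r α : ℝ} (hz : z = r * exp (α * I)) (l : ℕ) :
    z ^ l + conj z ^ l = 2 * (r : ℂ) ^ l * Real.cos (l * α) := by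
  have hconj : conj z = r * exp (-(α * I)) := by
    rw [hz, map_mul, conj_ofReal, ← exp_conj, map_mul, conj_ofReal, conj_I, mul_neg]
  rw [hconj, hz, mul_pow, mul_pow, ← exp_nat_mul, ← exp_nat_mul, ofReal_cos, ofReal_mul,
    ofReal_natCast, cos]
  ring_nf

lemma sqrt_seven_mul_sqrt_six_div_seven :
    Real.sqrt 7 * Real.sqrt (6 / 7) = 3 * Real.sqrt (2 / 3) := by
  rw [← Real.sqrt_mul (by norm_num), ← Real.sqrt_sq (by norm_num : (0 : ℝ) ≤ 3),
    ← Real.sqrt_mul (by norm_num)]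
  norm_num

lemma tetrahedron_vertex_eq_mul_exp {α : ℝ}
    (hα : exp (α * I) = -(1 / Real.sqrt 7) + I * Real.sqrt (6 / 7)) :
    -(1 / 3) + I * Real.sqrt (2 / 3) = ((Real.sqrt 7 / 3 : ℝ) : ℂ) * exp (α * I) := by
  have h7 : (Real.sqrt 7 : ℂ) ≠ 0 := by
    exact_mod_cast (Real.sqrt_pos.2 (by norm_num : (0 : ℝ) < 7)).ne'
  have key : (Real.sqrt 7 : ℂ) * Real.sqrt (6 / 7) = 3 * Real.sqrt (2 / 3) := by
    exact_mod_cast sqrt_seven_mul_sqrt_six_div_seven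
  rw [hα]
  push_cast
  field_simp
  linear_combination -I * key

theorem tetrahedron_harmonic_sum
    (n : Fin 4 → Fin 3 → ℝ)
    (h1 : n 0 = ![1, 0, 0])
    (h2 : n 1 = ![-(1/3), 0, -(2 * Real.sqrt 2 / 3)])
    (h3 : n 2 = ![-(1/3), Real.sqrt (2/3), Real.sqrt 2 / 3])
    (h4 : n 3 = ![-(1/3), -Real.sqrt (2/3), Real.sqrt 2 / 3])
    (α : ℝ)
    (hα : Complex.exp (α * I) = -(1 / Real.sqrt 7) + I * Real.sqrt (6/7))
    (S : ℕ → ℂ)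
    (hS : ∀ l, S l = ∑ j, ((n j 0 : ℂ) + I * (n j 1)) ^ l) :
    (∀ l : ℕ, S l = 1 + (3 : ℂ) ^ (-(l : ℤ)) *
        ((-1) ^ l + 2 * (Real.sqrt 7 : ℂ) ^ l * (Real.cos (l * α) : ℂ))) ∧
    S 3 ≠ 0 ∧ S 4 ≠ 0 ∧ S 1 = 0 ∧ S 2 = 0 := by
  set q : ℂ := I * Real.sqrt (2 / 3)
  have hq : q ^ 2 = -(2 / 3) := by
    rw [mul_pow, I_sq, ← ofReal_pow, Real.sq_sqrt (by norm_num)]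
    push_cast
    ring
  have hconj : conj (-(1 / 3) + q) = -(1 / 3) - q := by
    simp [q, map_ofNat, conj_ofReal, sub_eq_add_neg]
  have hsum : ∀ l : ℕ,
      S l = 1 + (-(1 / 3)) ^ l + ((-(1 / 3) + q) ^ l + conj (-(1 / 3) + q) ^ l) := by
    intro l
    rw [hS, Fin.sum_univ_four, h1, h2, h3, h4, hconj]
    simp only [Matrix.cons_val_zero, Matrix.cons_val_one, q]
    push_cast
    ring
  refine ⟨fun l => ?_, ?_, ?_, ?_, ?_⟩
  · rw [hsum, pow_add_conj_pow_eq_two_mul_cos (tetrahedron_vertex_eq_mul_exp hα), zpow_neg,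
      zpow_natCast]
    push_cast
    rw [neg_div' 3 1, div_pow, div_pow]
    field_simp
    ring
  · have hS3 : S 3 = 20 / 9 := by rw [hsum, hconj]; linear_combination (-2 : ℂ) * hq
    norm_num [hS3]
  · have hS4 : S 4 = 28 / 27 := by rw [hsum, hconj]; linear_combination 2 * q ^ 2 * hq
    norm_num [hS4]
  · rw [hsum, hconj]; ring
  · rw [hsum, hconj]; linear_combination 2 * hq
end
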